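/- Uniqueness part of the characterization of the Colomer-Martínez index: if a power index f on weighted majority games satisfies efficiency, the null player property, weighted symmetry, and DP-weighted mergeability, then f coincides with the Colomer-Martínez index on every weighted majority game with at least one winning coalition and positive weights on players in minimal winning coalitions. -/
import Mathlib


open scoped Classical

noncomputable section

/-- A coalition `S` is winning in the weighted majority game `[q; w]`. -/
def winning {ι : Type*} (q : ℝ) (w : ι → ℝ) (S : Finset ι) : Prop :=
  q ≤ ∑ i ∈ S, w i

/-- `S` is a minimal winning coalition of `[q; w]`. -/
def MWC {ι : Type*} (q : ℝ) (w : ι → ℝ) (S : Finset ι) : Prop :=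
  winning q w S ∧ ∀ T ⊂ S, ¬ winning q w T

/-- The set `M(q;w)` of minimal winning coalitions. -/
def Mset {ι : Type*} [Fintype ι] (q : ℝ) (w : ι → ℝ) : Finset (Finset ι) :=
  Finset.univ.filter (MWC q w)

/-- The set `M_i(q;w)` of minimal winning coalitions containing `i`. -/
def Mi {ι : Type*} [Fintype ι] (q : ℝ) (w : ι → ℝ) (i : ι) : Finset (Finset ι) :=
  (Mset q w).filter (fun S => i ∈ S)

/-- `[q;w]` is a weighted majority game: positive quota, nonnegative weights,
grand coalition winning. -/
def WMG {ι : Type*} [Fintype ι] (q : ℝ) (w : ι → ℝ) : Prop :=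
  0 < q ∧ (∀ i, 0 ≤ w i) ∧ q ≤ ∑ i, w i

/-- The Colomer-Martínez power index. -/
def CM {ι : Type*} [Fintype ι] (q : ℝ) (w : ι → ℝ) (i : ι) : ℝ :=
  (1 / ((Mset q w).card : ℝ)) * ∑ S ∈ Mi q w i, w i / (∑ j ∈ S, w j)

/-- The Holler-Colomer-Martínez power index. -/
def HCM {ι : Type*} [Fintype ι] (q : ℝ) (w : ι → ℝ) (i : ι) : ℝ :=
  (((Mi q w i).card : ℝ) * w i) / ∑ j, ((Mi q w j).card : ℝ) * w j

/-- `[qU; wU]` is the WM-union of the games `[q k; w k]`: the quota is the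
minimum of the quotas and the weights are the componentwise maxima. -/
def WMUnion {ι : Type*} {p : ℕ} (q : Fin p → ℝ) (w : Fin p → ι → ℝ)
    (qU : ℝ) (wU : ι → ℝ) : Prop :=
  IsLeast (Set.range q) qU ∧ ∀ i, IsGreatest (Set.range fun k => w k i) (wU i)

/-- The games `[q k; w k]` are WM-mergeable, with WM-union `[qU; wU]`. -/
def Mergeable {ι : Type*} [Fintype ι] {p : ℕ} (q : Fin p → ℝ) (w : Fin p → ι → ℝ)
    (qU : ℝ) (wU : ι → ℝ) : Prop :=
  WMUnion q w qU wU ∧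
  (∀ k l, q k = q l) ∧
  (∀ i k l, w k i ≠ w l i → w k i = 0 ∨ w l i = 0) ∧
  (∀ S : Finset ι, S ≠ Finset.univ → (∀ k, ∑ i ∈ S, w k i < q k) →
    ∑ i ∈ S, wU i < qU) ∧
  (Mset qU wU).card = ∑ k, (Mset (q k) (w k)).card

lemma mem_Mset {ι : Type*} [Fintype ι] {q : ℝ} {w : ι → ℝ} {S : Finset ι} :
    S ∈ Mset q w ↔ MWC q w S := by simp [Mset]

lemma exists_mwc {ι : Type*} {q : ℝ} {w : ι → ℝ} (T : Finset ι) (hT : winning q w T) :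
    ∃ S ⊆ T, MWC q w S := by
  induction T using Finset.strongInduction with
  | _ T ih =>
    by_cases h : ∀ T' ⊂ T, ¬ winning q w T'
    · exact ⟨T, subset_rfl, hT, h⟩
    · push_neg at h
      obtain ⟨T', hsub, hw⟩ := h
      obtain ⟨S, hS, hm⟩ := ih T' hsub hw
      exact ⟨S, hS.trans hsub.subset, hm⟩

lemma Mset_nonempty {ι : Type*} [Fintype ι] {q : ℝ} {w : ι → ℝ} (h : WMG q w) :
    (Mset q w).Nonempty := by
  obtain ⟨S, _, hm⟩ := exists_mwc (q := q) (w := w) Finset.univ h.2.2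
  exact ⟨S, mem_Mset.2 hm⟩

/-- uniqueness for games with a single minimal winning coalition -/
lemma f_single {ι : Type*} [Fintype ι] (f : ℝ → (ι → ℝ) → ι → ℝ)
    (hEFF : ∀ q w, WMG q w → ∑ i, f q w i = 1)
    (hNP : ∀ q w, WMG q w → ∀ i, Mi q w i = ∅ → f q w i = 0)
    (hSYMw : ∀ q w, WMG q w → ∀ S : Finset ι, Mset q w = {S} →
      ∀ i ∈ S, ∀ j ∈ S, f q w i / f q w j = w i / w j)
    (q : ℝ) (w : ι → ℝ) (hW : WMG q w) (S : Finset ι) (hS : Mset q w = {S})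
    (hpos : ∀ i ∈ S, 0 < w i) (i : ι) :
    f q w i = if i ∈ S then w i / ∑ j ∈ S, w j else 0 := by
  have hSM : S ∈ Mset q w := by rw [hS]; exact Finset.mem_singleton_self S
  have hnull : ∀ j, j ∉ S → f q w j = 0 := by
    intro j hj
    apply hNP q w hW
    rw [Mi, hS]
    simp [Finset.filter_singleton, hj]
  by_cases hi : i ∈ S
  · -- all f values on S are nonzero
    have hfne : ∀ j ∈ S, f q w j ≠ 0 := by
      intro j hj hzero
      have := hSYMw q w hW S hS j hj j hj
      rw [hzero, div_zero, div_self (hpos j hj).ne'] at this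
      exact one_ne_zero this.symm
    have hratio : ∀ j ∈ S, f q w j = w j / w i * f q w i := by
      intro j hj
      have := hSYMw q w hW S hS j hj i hi
      rw [div_eq_div_iff (hfne i hi) (hpos i hi).ne'] at this
      rw [div_mul_eq_mul_div, eq_div_iff (hpos i hi).ne']
      linarith [this]
    have hsum : ∑ j ∈ S, f q w j = 1 := by
      rw [← hEFF q w hW]
      exact Finset.sum_subset (Finset.subset_univ S) (fun j _ hj => hnull j hj)
    rw [Finset.sum_congr rfl hratio, ← Finset.sum_mul, ← Finset.sum_div] at hsum
    have hwS : 0 < ∑ j ∈ S, w j := lt_of_lt_of_le hW.1 (mem_Mset.1 hSM).1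
    rw [if_pos hi, eq_div_iff hwS.ne']
    field_simp [(hpos i hi).ne'] at hsum
    linear_combination hsum
  · rw [if_neg hi]; exact hnull i hi

theorem CM_uniqueness {ι : Type*} [Fintype ι] (f : ℝ → (ι → ℝ) → ι → ℝ)
    (hEFF : ∀ q w, WMG q w → ∑ i, f q w i = 1)
    (hNP : ∀ q w, WMG q w → ∀ i, Mi q w i = ∅ → f q w i = 0)
    (hSYMw : ∀ q w, WMG q w → ∀ S : Finset ι, Mset q w = {S} →
      ∀ i ∈ S, ∀ j ∈ S, f q w i / f q w j = w i / w j)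
    (hDPMw : ∀ (p : ℕ), 1 < p → ∀ (q : Fin p → ℝ) (w : Fin p → ι → ℝ)
      (qU : ℝ) (wU : ι → ℝ), (∀ k, WMG (q k) (w k)) → Mergeable q w qU wU →
      ∀ i, f qU wU i =
        (∑ k, ((Mset (q k) (w k)).card : ℝ) * f (q k) (w k) i) /
          ((Mset qU wU).card : ℝ)) :
    ∀ q w, WMG q w → (∀ S ∈ Mset q w, ∀ i ∈ S, 0 < w i) →
      ∀ i, f q w i = CM q w i := by
  intro q w hW hpos i
  set m := (Mset q w).card with hm
  have hm0 : 0 < m := Finset.card_pos.2 (Mset_nonempty hW)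
  rcases Nat.lt_or_ge m 2 with h1 | h2
  · -- m = 1
    have hm1 : m = 1 := by omega
    obtain ⟨S, hS⟩ := Finset.card_eq_one.1 hm1
    have hSM : S ∈ Mset q w := by rw [hS]; exact Finset.mem_singleton_self S
    rw [f_single f hEFF hNP hSYMw q w hW S hS (hpos S hSM), CM, Mi, hS]
    by_cases hi : i ∈ S <;>
      simp [Finset.filter_singleton, hi]
  · -- m ≥ 2
    set e := (Mset q w).equivFin with he
    set Sk : Fin m → Finset ι := fun k => (e.symm k : Finset ι) with hSkdef
    have hSk : ∀ k, Sk k ∈ Mset q w := fun k => (e.symm k).2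
    set w' : Fin m → ι → ℝ := fun k j => if j ∈ Sk k ∨ Mi q w j = ∅ then w j else 0
      with hw'
    have hw'eq : ∀ k, ∀ j ∈ Sk k, w' k j = w j := fun k j hj => if_pos (Or.inl hj)
    have hw'nonneg : ∀ k j, 0 ≤ w' k j := by
      intro k j; by_cases h : j ∈ Sk k ∨ Mi q w j = ∅ <;> simp [hw', h, hW.2.1 j]
    have hw'le : ∀ k j, w' k j ≤ w j := by
      intro k j; by_cases h : j ∈ Sk k ∨ Mi q w j = ∅ <;> simp [hw', h, hW.2.1 j]
    have hsumSk : ∀ k, ∑ j ∈ Sk k, w' k j = ∑ j ∈ Sk k, w j :=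
      fun k => Finset.sum_congr rfl (hw'eq k)
    have hwin : ∀ k T, Sk k ⊆ T → winning q (w' k) T := by
      intro k T hsub
      have h1 : q ≤ ∑ j ∈ Sk k, w' k j := by
        rw [hsumSk k]; exact (mem_Mset.1 (hSk k)).1
      exact h1.trans (Finset.sum_le_sum_of_subset_of_nonneg hsub
        (fun j _ _ => hw'nonneg k j))
    have hWMG' : ∀ k, WMG q (w' k) :=
      fun k => ⟨hW.1, hw'nonneg k, hwin k Finset.univ (Finset.subset_univ _)⟩
    have hsub : ∀ k T, winning q (w' k) T → Sk k ⊆ T := by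
      intro k T hwinT
      have hT' : winning q w (T.filter (fun j => j ∈ Sk k ∨ Mi q w j = ∅)) := by
        unfold winning at hwinT ⊢
        rwa [Finset.sum_filter]
      obtain ⟨S', hS'T, hS'⟩ := exists_mwc _ hT'
      have hS'Sk : S' ⊆ Sk k := by
        intro j hj
        have := hS'T hj
        rw [Finset.mem_filter] at this
        rcases this.2 with h | h
        · exact h
        · exfalso
          have : S' ∈ Mi q w j := by
            rw [Mi, Finset.mem_filter]; exact ⟨mem_Mset.2 hS', hj⟩
          rw [h] at this; exact absurd this (Finset.notMem_empty _)
      rcases ssubset_or_eq_of_subset hS'Sk with hlt | heq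
      · exact absurd hS'.1 ((mem_Mset.1 (hSk k)).2 S' hlt)
      · rw [← heq]
        exact hS'T.trans (Finset.filter_subset _ _)
    have hMset' : ∀ k, Mset q (w' k) = {Sk k} := by
      intro k
      ext T
      rw [mem_Mset, Finset.mem_singleton]
      constructor
      · rintro ⟨hwinT, hminT⟩
        rcases ssubset_or_eq_of_subset (hsub k T hwinT) with hlt | heq
        · exact absurd (hwin k (Sk k) subset_rfl) (hminT (Sk k) hlt)
        · exact heq.symm
      · rintro rfl
        refine ⟨hwin k _ subset_rfl, fun T' hT' hwinT' => ?_⟩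
        exact absurd (hsub k T' hwinT') (Finset.not_subset.2
          (Finset.exists_of_ssubset hT'))
    have hzero : Fin m := ⟨0, by omega⟩
    have hMerge : Mergeable (fun _ => q) w' q w := by
      refine ⟨⟨⟨⟨hzero, rfl⟩, ?_⟩, ?_⟩, fun k l => rfl, ?_, ?_, ?_⟩
      · rintro x ⟨k, rfl⟩; exact le_rfl
      · intro j
        constructor
        · by_cases hMi : Mi q w j = ∅
          · exact ⟨hzero, if_pos (Or.inr hMi)⟩
          · obtain ⟨S, hS⟩ := Finset.nonempty_iff_ne_empty.2 hMi
            rw [Mi, Finset.mem_filter] at hS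
            refine ⟨e ⟨S, hS.1⟩, ?_⟩
            have hSkval : Sk (e ⟨S, hS.1⟩) = S := by simp [hSkdef]
            exact if_pos (Or.inl (hSkval.symm ▸ hS.2))
        · rintro x ⟨k, rfl⟩; exact hw'le k j
      · intro j k l hne
        by_cases h1 : j ∈ Sk k ∨ Mi q w j = ∅
        · by_cases h2 : j ∈ Sk l ∨ Mi q w j = ∅
          · exact absurd (by simp [hw', h1, h2]) hne
          · right; simp [hw', h2]
        · left; simp [hw', h1]
      · intro S _ hlt
        by_contra hge
        push_neg at hge
        obtain ⟨S', hS'S, hS'⟩ := exists_mwc S hge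
        set k := e ⟨S', mem_Mset.2 hS'⟩ with hk
        have hSkval : Sk k = S' := by rw [hSkdef, hk]; simp
        have : winning q (w' k) S := hwin k S (hSkval ▸ hS'S)
        exact absurd this (not_le.2 (hlt k))
      · simp only [hMset', Finset.card_singleton, Finset.sum_const, smul_eq_mul,
          mul_one, Finset.card_univ, Fintype.card_fin, ← hm]
    have hDP := hDPMw m h2 (fun _ => q) w' q w hWMG' hMerge i
    have hfk : ∀ k, f q (w' k) i =
        if i ∈ Sk k then w i / ∑ j ∈ Sk k, w j else 0 := by
      intro k
      rw [f_single f hEFF hNP hSYMw q (w' k) (hWMG' k) (Sk k) (hMset' k)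
        (fun j hj => (hw'eq k j hj) ▸ hpos (Sk k) (hSk k) j hj) i]
      by_cases hi : i ∈ Sk k
      · rw [if_pos hi, if_pos hi, hw'eq k i hi, hsumSk k]
      · rw [if_neg hi, if_neg hi]
    have hsumconv : ∑ k, (if i ∈ Sk k then w i / ∑ j ∈ Sk k, w j else 0) =
        ∑ S ∈ Mset q w, (if i ∈ S then w i / ∑ j ∈ S, w j else 0) := by
      rw [← Finset.sum_coe_sort (Mset q w)
        (fun S => if i ∈ S then w i / ∑ j ∈ S, w j else 0)]
      exact (Fintype.sum_equiv e
        (fun s => if i ∈ (s : Finset ι) then w i / ∑ j ∈ (s : Finset ι), w j else 0)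
        (fun k => if i ∈ Sk k then w i / ∑ j ∈ Sk k, w j else 0)
        (fun s => by rw [hSkdef]; simp)).symm
    rw [hDP, CM]
    simp only [hMset', Finset.card_singleton, Nat.cast_one, one_mul]
    rw [Finset.sum_congr rfl (fun k _ => hfk k), hsumconv, ← hm]
    rw [Mi, Finset.sum_filter]
    rw [div_eq_mul_inv, mul_comm, one_div]
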